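/- For all r > 0 and μ > 0, the integral ∫₀ʳ (2μ r / √(r² - y²))·exp(-2μ√(r² - y²)) dy equals (π r μ)·(I₀(2rμ) - L₀(2rμ)), where I₀ is the modified Bessel function of the first kind of order 0 and L₀ is the modified Struve function of order 0. -/

import Mathlib

/-!
The substitution `y = r sin θ` turns the integral into `2μr ∫₀^{π/2} exp(-2rμ cos θ) dθ`.
Expanding the exponential and integrating termwise, Wallis' integrals
`∫₀^{π/2} cos^n = √π Γ((n+1)/2) / (2 Γ(n/2+1))` combine with Legendre's duplication formula into
`∫₀^{π/2} exp(-z cos θ) dθ = (π/2) ∑ₙ (-z/2)^n / Γ(n/2+1)²`, whose even terms form the series of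
`I₀(z)` and whose odd terms form that of `-L₀(z)`.
-/

open Real MeasureTheory

/-- Modified Bessel function of the first kind of integer order `n`. -/
noncomputable def besselI (n : ℕ) (x : ℝ) : ℝ :=
  ∑' k : ℕ, (x / 2) ^ (2 * k + n) / ((Nat.factorial k : ℝ) * (Nat.factorial (k + n) : ℝ))

/-- Modified Struve function of real order `ν`. -/
noncomputable def struveL (ν : ℝ) (x : ℝ) : ℝ :=
  ∑' k : ℕ, (x / 2) ^ (2 * (k : ℝ) + ν + 1) /
    (Real.Gamma ((k : ℝ) + 3 / 2) * Real.Gamma ((k : ℝ) + ν + 3 / 2))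

open scoped Nat

theorem sqrt_sq_sub_sq_mul_sin {r θ : ℝ} (hr : 0 ≤ r) (hθ : θ ∈ Set.Icc (-(π / 2)) (π / 2)) :
    √(r ^ 2 - (r * sin θ) ^ 2) = r * cos θ := by
  rw [show r ^ 2 - (r * sin θ) ^ 2 = r ^ 2 * (1 - sin θ ^ 2) by ring, sqrt_mul (sq_nonneg r),
    sqrt_sq hr, ← cos_eq_sqrt_one_sub_sin_sq hθ.1 hθ.2]

theorem integral_inv_sqrt_sq_sub_sq_smul {E : Type*} [NormedAddCommGroup E] [NormedSpace ℝ E]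
    {r : ℝ} (hr : 0 < r) (f : ℝ → E) :
    ∫ y in (0 : ℝ)..r, (√(r ^ 2 - y ^ 2))⁻¹ • f √(r ^ 2 - y ^ 2) =
      ∫ θ in (0 : ℝ)..π / 2, f (r * cos θ) := by
  have hπ : (0 : ℝ) ≤ π / 2 := by positivity
  have hsub := intervalIntegral.integral_deriv_smul_comp_of_deriv_nonneg
    (f := fun θ ↦ r * sin θ) (f' := fun θ ↦ r * cos θ)
    (g := fun y ↦ (√(r ^ 2 - y ^ 2))⁻¹ • f √(r ^ 2 - y ^ 2)) (a := 0) (b := π / 2)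
    (by fun_prop) (fun θ _ ↦ (hasDerivAt_sin θ).const_mul r) (fun θ hθ ↦ ?_)
  · simp only [sin_zero, mul_zero, sin_pi_div_two, mul_one] at hsub
    rw [← hsub]
    -- the integrands differ at `θ = π / 2`, where `cos θ = 0`
    refine intervalIntegral.integral_congr_Ioo_of_le hπ fun θ hθ ↦ ?_
    have hθ' : θ ∈ Set.Icc (-(π / 2)) (π / 2) := ⟨by linarith [hθ.1], hθ.2.le⟩
    have hcos : 0 < r * cos θ := mul_pos hr (cos_pos_of_mem_Ioo ⟨by linarith [hθ.1], hθ.2⟩)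
    simp only [Function.comp, sqrt_sq_sub_sq_mul_sin hr.le hθ', smul_smul,
      mul_inv_cancel₀ hcos.ne', one_smul]
  · simp only [min_eq_left hπ, max_eq_right hπ] at hθ
    exact mul_nonneg hr.le (cos_nonneg_of_mem_Icc ⟨by linarith [hθ.1], hθ.2.le⟩)

theorem integral_cos_pow_eq_Gamma (n : ℕ) :
    ∫ x in (0 : ℝ)..π / 2, cos x ^ n = √π * Gamma ((n + 1) / 2) / (2 * Gamma (n / 2 + 1)) := by
  induction n using Nat.twoStepInduction with
  | zero =>
    rw [show ((0 : ℕ) + 1 : ℝ) / 2 = 1 / 2 by norm_num, Gamma_one_half_eq]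
    simp [← sq, sq_sqrt pi_pos.le]
  | one =>
    rw [show ((1 : ℕ) : ℝ) / 2 + 1 = 1 / 2 + 1 by norm_num, Gamma_add_one (by norm_num),
      Gamma_one_half_eq]
    have := sqrt_pos.2 pi_pos
    simp
    field_simp
  | more n ih _ =>
    have hodd : Gamma (((n + 2 : ℕ) + 1 : ℝ) / 2) = (n + 1) / 2 * Gamma ((n + 1) / 2) := by
      rw [← Gamma_add_one (by positivity)]; push_cast; ring_nf
    have heven : Gamma (((n + 2 : ℕ) : ℝ) / 2 + 1) = (n / 2 + 1) * Gamma (n / 2 + 1) := by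
      rw [← Gamma_add_one (by positivity)]; push_cast; ring_nf
    have := Gamma_pos_of_pos (show (0 : ℝ) < n / 2 + 1 by positivity)
    rw [integral_cos_pow, ih, hodd, heven]
    simp
    field_simp

theorem factorial_eq_two_pow_mul_Gamma_mul_Gamma (n : ℕ) :
    (n ! : ℝ) = 2 ^ n * Gamma ((n + 1) / 2) * Gamma (n / 2 + 1) / √π := by
  have h := Gamma_mul_Gamma_add_half ((n + 1) / 2)
  rw [show ((n : ℝ) + 1) / 2 + 1 / 2 = n / 2 + 1 by ring,
    show 2 * (((n : ℝ) + 1) / 2) = n + 1 by ring, Gamma_nat_eq_factorial,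
    show (1 : ℝ) - (n + 1) = -n by ring, rpow_neg (by norm_num), rpow_natCast] at h
  rw [mul_assoc, h]
  field_simp

theorem pow_div_factorial_mul_integral_cos_pow (z : ℝ) (n : ℕ) :
    z ^ n / n ! * ∫ x in (0 : ℝ)..π / 2, cos x ^ n =
      π / 2 * ((z / 2) ^ n / Gamma (n / 2 + 1) ^ 2) := by
  have := Gamma_pos_of_pos (show (0 : ℝ) < (n + 1) / 2 by positivity)
  have := Gamma_pos_of_pos (show (0 : ℝ) < n / 2 + 1 by positivity)
  have := sqrt_pos.2 pi_pos
  rw [integral_cos_pow_eq_Gamma, factorial_eq_two_pow_mul_Gamma_mul_Gamma, div_pow]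
  field_simp
  rw [sq_sqrt pi_pos.le]

theorem hasSum_integral_exp_mul_cos (z a b : ℝ) :
    HasSum (fun n : ℕ ↦ z ^ n / n ! * ∫ x in a..b, cos x ^ n) (∫ x in a..b, exp (z * cos x)) := by
  simp_rw [← intervalIntegral.integral_const_mul]
  refine intervalIntegral.hasSum_integral_of_dominated_convergence (fun n _ ↦ |z| ^ n / n !)
    (fun n ↦ by fun_prop) (fun n ↦ .of_forall fun x _ ↦ ?_)
    (.of_forall fun _ _ ↦ summable_pow_div_factorial _) intervalIntegrable_const
    (.of_forall fun x _ ↦ ?_)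
  · rw [norm_mul, norm_div, norm_pow, norm_pow, RCLike.norm_natCast]
    exact mul_le_of_le_one_right (by positivity) (pow_le_one₀ (norm_nonneg _) (abs_cos_le_one x))
  · simpa [exp_eq_exp_ℝ, mul_pow, mul_div_right_comm] using
      NormedSpace.expSeries_div_hasSum_exp (z * cos x)

theorem integral_exp_neg_mul_cos (z : ℝ) :
    ∫ x in (0 : ℝ)..π / 2, exp (-z * cos x) = π / 2 * (besselI 0 z - struveL 0 z) := by
  set c : ℕ → ℝ := fun n ↦ (-z / 2) ^ n / Gamma (n / 2 + 1) ^ 2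
  have hsum : HasSum (fun n ↦ π / 2 * c n) (∫ x in (0 : ℝ)..π / 2, exp (-z * cos x)) := by
    simpa only [pow_div_factorial_mul_integral_cos_pow] using
      hasSum_integral_exp_mul_cos (-z) 0 (π / 2)
  have hc : Summable c := (summable_mul_left_iff (by positivity)).1 hsum.summable
  have heven (k : ℕ) : c (2 * k) = (z / 2) ^ (2 * k + 0) / (k ! * (k + 0)!) := by
    have : ((2 * k : ℕ) : ℝ) / 2 + 1 = k + 1 := by push_cast; ring
    simp only [c, this, Gamma_nat_eq_factorial, add_zero, Even.neg_pow ⟨k, two_mul k⟩, neg_div, sq]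
  have hodd (k : ℕ) : c (2 * k + 1) =
      -((z / 2) ^ (2 * (k : ℝ) + 0 + 1) / (Gamma (k + 3 / 2) * Gamma (k + 0 + 3 / 2))) := by
    have h1 : ((2 * k + 1 : ℕ) : ℝ) / 2 + 1 = k + 3 / 2 := by push_cast; ring
    have h2 : 2 * (k : ℝ) + 1 = (2 * k + 1 : ℕ) := by push_cast; ring
    simp only [c, h1, h2, rpow_natCast, add_zero, neg_div, Odd.neg_pow ⟨k, rfl⟩, sq]
  rw [← hsum.tsum_eq, tsum_mul_left, ← tsum_even_add_odd (hc.comp_injective fun a b h ↦ by omega)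
    (hc.comp_injective fun a b h ↦ by omega), besselI, struveL, tsum_congr heven,
    tsum_congr hodd, tsum_neg, sub_eq_add_neg]

theorem integral_deriv_exp_sqrt_eq_bessel_struve_general (r μ : ℝ) (hr : 0 < r) :
    ∫ y in (0:ℝ)..r,
        (2 * μ * r / Real.sqrt (r ^ 2 - y ^ 2)) * Real.exp (-2 * μ * Real.sqrt (r ^ 2 - y ^ 2)) =
      (π * r * μ) * (besselI 0 (2 * r * μ) - struveL 0 (2 * r * μ)) := by
  calc ∫ y in (0:ℝ)..r,
        (2 * μ * r / √(r ^ 2 - y ^ 2)) * exp (-2 * μ * √(r ^ 2 - y ^ 2))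
      = ∫ y in (0:ℝ)..r, (√(r ^ 2 - y ^ 2))⁻¹ • (2 * μ * r * exp (-2 * μ * √(r ^ 2 - y ^ 2))) :=
        intervalIntegral.integral_congr fun y _ ↦ by rw [smul_eq_mul]; ring
    _ = ∫ θ in (0:ℝ)..π / 2, 2 * μ * r * exp (-2 * μ * (r * cos θ)) :=
        integral_inv_sqrt_sq_sub_sq_smul hr fun s ↦ 2 * μ * r * exp (-2 * μ * s)
    _ = 2 * μ * r * ∫ θ in (0:ℝ)..π / 2, exp (-(2 * r * μ) * cos θ) := by
        rw [intervalIntegral.integral_const_mul]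
        ring_nf
    _ = (π * r * μ) * (besselI 0 (2 * r * μ) - struveL 0 (2 * r * μ)) := by
        rw [integral_exp_neg_mul_cos]
        ring

theorem integral_deriv_exp_sqrt_eq_bessel_struve (r μ : ℝ) (hr : 0 < r) (hμ : 0 < μ) :
    ∫ y in (0:ℝ)..r,
        (2 * μ * r / Real.sqrt (r ^ 2 - y ^ 2)) * Real.exp (-2 * μ * Real.sqrt (r ^ 2 - y ^ 2)) =
      (π * r * μ) * (besselI 0 (2 * r * μ) - struveL 0 (2 * r * μ)) :=
  integral_deriv_exp_sqrt_eq_bessel_struve_general r μ hr
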